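/- Let B > 0, t ∈ (0,1), T = 1/t, and let B̃₊ := B/q̃₊(t) where q̃₊(t) = √((1−t³)(5+t³)/(5(1−t⁴))). The function ỹ₊(x) := [tanh(tanh⁻¹(t^{3/2}) + 1.5√2·B̃₊·(1−x))]^{−2/3} satisfies ỹ₊″ = B̃₊²·(5ỹ₊⁴ − 4ỹ₊ − ỹ₊^{−2}) on [0,1], with ỹ₊(1) = T and ỹ₊(0) = (1 + 2/(exp(2·tanh⁻¹(t^{3/2}) + 3√2·B̃₊) − 1))^{2/3}. -/

import Mathlib

/-!
`w(x) = tanh (a + c (1 - x))` solves the Riccati equation `w' = -c (1 - w²)`, so every power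
`w ^ p` has a second derivative that is a combination of `w ^ (p - 2)`, `w ^ p` and `w ^ (p + 2)`.
For `p = -2/3` and `y = w ^ p` these are `y ⁴`, `y` and `y ^ (-2)`, and `c² = 9 B̃₊² / 2` turns the
coefficients into `B̃₊² (5, -4, -1)`. The boundary values come from `tanh (tanh⁻¹ s) = s` and
`1 / tanh v = 1 + 2 / (exp (2 v) - 1)`.
-/

/-- The inverse hyperbolic tangent, `tanh⁻¹ x = (1/2) log((1+x)/(1-x))`. -/
noncomputable def arctanh (x : ℝ) : ℝ := Real.log ((1 + x) / (1 - x)) / 2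

open Real Set Filter Topology

theorem hasDerivAt_tanh (x : ℝ) : HasDerivAt tanh (1 - tanh x ^ 2) x := by
  have h := (hasDerivAt_sinh x).div (hasDerivAt_cosh x) (cosh_pos x).ne'
  rw [show tanh = fun y => sinh y / cosh y from funext tanh_eq_sinh_div_cosh]
  refine h.congr_deriv ?_
  have := cosh_sq x
  field_simp

theorem tanh_pos {x : ℝ} (hx : 0 < x) : 0 < tanh x := by
  rw [tanh_eq_sinh_div_cosh]
  exact div_pos (sinh_pos_iff.mpr hx) (cosh_pos x)

theorem inv_tanh_eq_one_add_two_div {x : ℝ} (hx : x ≠ 0) :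
    (tanh x)⁻¹ = 1 + 2 / (exp (2 * x) - 1) := by
  have h : exp (2 * x) - 1 ≠ 0 := by
    rw [sub_ne_zero, Ne, exp_eq_one_iff]; simpa using hx
  rw [show 2 * x = x + x by ring, exp_add, ← sq] at *
  rw [tanh_eq, exp_neg]
  have := exp_pos x
  field_simp
  ring

theorem arctanh_eq_artanh {x : ℝ} (hx : x ∈ Icc (-1) 1) : arctanh x = artanh x := by
  rw [artanh_eq_half_log hx, arctanh]; ring

theorem HasDerivAt.rpow_of_riccati {w : ℝ → ℝ} {k p x : ℝ}
    (hw : HasDerivAt w (k * (1 - w x ^ 2)) x) (hpos : 0 < w x) :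
    HasDerivAt (fun x => w x ^ p) (p * k * (w x ^ (p - 1) - w x ^ (p + 1))) x := by
  refine (hw.rpow_const (Or.inl hpos.ne')).congr_deriv ?_
  rw [show p + 1 = (p - 1) + (2 : ℕ) by push_cast; ring, rpow_add_natCast hpos.ne']
  ring

theorem deriv_deriv_rpow_of_riccati {w : ℝ → ℝ} {k p : ℝ} {U : Set ℝ} (hU : IsOpen U)
    (hw : ∀ x ∈ U, HasDerivAt w (k * (1 - w x ^ 2)) x) (hpos : ∀ x ∈ U, 0 < w x)
    {x : ℝ} (hx : x ∈ U) :
    deriv (deriv fun x => w x ^ p) x =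
      p * k ^ 2 * ((p - 1) * w x ^ (p - 2) - 2 * p * w x ^ p + (p + 1) * w x ^ (p + 2)) := by
  have hderiv : deriv (fun x => w x ^ p) =ᶠ[𝓝 x]
      fun x => p * k * (w x ^ (p - 1) - w x ^ (p + 1)) :=
    eventually_of_mem (hU.mem_nhds hx) fun z hz => ((hw z hz).rpow_of_riccati (hpos z hz)).deriv
  have h₁ := (hw x hx).rpow_of_riccati (p := p - 1) (hpos x hx)
  have h₂ := (hw x hx).rpow_of_riccati (p := p + 1) (hpos x hx)
  have h : HasDerivAt (fun x => p * k * (w x ^ (p - 1) - w x ^ (p + 1))) _ x :=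
    (h₁.sub h₂).const_mul (p * k)
  rw [hderiv.deriv_eq, h.deriv]
  rw [show p - 1 - 1 = p - 2 by ring, show p - 1 + 1 = p by ring, show p + 1 - 1 = p by ring,
    show p + 1 + 1 = p + 2 by ring]
  ring

theorem hasDerivAt_tanh_affine (a c x : ℝ) :
    HasDerivAt (fun x => tanh (a + c * (1 - x))) (-c * (1 - tanh (a + c * (1 - x)) ^ 2)) x := by
  have h := ((((hasDerivAt_id' x).const_sub 1).const_mul c).const_add a)
  refine ((hasDerivAt_tanh _).comp x h).congr_deriv ?_
  ring

theorem upper_envelope_formula (B t T qp Bp : ℝ)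
    (hB : 0 < B) (ht : t ∈ Set.Ioo (0:ℝ) 1) (hT : T = 1 / t)
    (hqp : qp = Real.sqrt ((1 - t ^ 3) * (5 + t ^ 3) / (5 * (1 - t ^ 4))))
    (hBp : Bp = B / qp)
    (y : ℝ → ℝ)
    (hy : ∀ x : ℝ, y x =
      (Real.tanh (arctanh (t ^ ((3:ℝ)/2)) + 1.5 * Real.sqrt 2 * Bp * (1 - x)))
        ^ (-(2:ℝ)/3)) :
    (∀ x ∈ Set.Icc (0:ℝ) 1,
      deriv (deriv y) x = Bp ^ 2 * (5 * y x ^ 4 - 4 * y x - y x ^ (-(2:ℝ)))) ∧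
    y 1 = T ∧
    y 0 = (1 + 2 / (Real.exp (2 * arctanh (t ^ ((3:ℝ)/2)) + 3 * Real.sqrt 2 * Bp) - 1))
            ^ ((2:ℝ)/3) := by
  obtain ⟨ht0, ht1⟩ := ht
  set s := t ^ ((3:ℝ)/2) with hs_def
  have hs : s ∈ Ioo 0 1 := ⟨rpow_pos_of_pos ht0 _, rpow_lt_one ht0.le ht1 (by norm_num)⟩
  have htanh_a : tanh (arctanh s) = s := by
    rw [arctanh_eq_artanh ⟨by linarith [hs.1], hs.2.le⟩, tanh_artanh ⟨by linarith [hs.1], hs.2⟩]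
  have ha : 0 < arctanh s := by
    rw [arctanh_eq_artanh ⟨by linarith [hs.1], hs.2.le⟩]; exact artanh_pos hs
  set a := arctanh s
  have hc : 0 ≤ 1.5 * √2 * Bp := by
    have : 0 ≤ Bp := hBp ▸ div_nonneg hB.le (hqp ▸ sqrt_nonneg _)
    positivity
  set c := 1.5 * √2 * Bp with hc_def
  have hy' : y = fun x => tanh (a + c * (1 - x)) ^ (-(2:ℝ)/3) := funext hy
  refine ⟨fun x hx => ?_, ?_, ?_⟩
  · set U := {x | 0 < a + c * (1 - x)}
    have hU : IsOpen U := isOpen_lt continuous_const (by fun_prop)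
    have hxU : x ∈ U := by
      show 0 < a + c * (1 - x); nlinarith [hx.2]
    have hBp_sq : Bp ^ 2 = 2 / 9 * (-c) ^ 2 := by
      rw [hc_def, neg_sq, mul_pow, mul_pow, sq_sqrt zero_le_two]; norm_num; ring
    set w := tanh (a + c * (1 - x))
    have hw : 0 < w := tanh_pos hxU
    have hw4 : (w ^ (-(2:ℝ)/3)) ^ 4 = w ^ (-(8:ℝ)/3) := by
      rw [← rpow_natCast, ← rpow_mul hw.le]; norm_num
    have hw2 : (w ^ (-(2:ℝ)/3)) ^ (-(2:ℝ)) = w ^ ((4:ℝ)/3) := by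
      rw [← rpow_mul hw.le]; norm_num
    rw [hy x, hw4, hw2, hy', deriv_deriv_rpow_of_riccati hU
      (fun z _ => hasDerivAt_tanh_affine a c z) (fun z hz => tanh_pos hz) hxU, hBp_sq]
    norm_num
    ring
  · rw [hy, sub_self, mul_zero, add_zero, htanh_a, hs_def, ← rpow_mul ht0.le, hT]
    norm_num [rpow_neg_one]
  · have hpos : 0 < a + c := by linarith
    rw [hy, sub_zero, mul_one, neg_div, rpow_neg (tanh_pos hpos).le, ← inv_rpow (tanh_pos hpos).le,
      inv_tanh_eq_one_add_two_div hpos.ne', hc_def]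
    ring_nf
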